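/- arXiv:1506.05963 — 5 statements merged into one kernel-verified Lean document; each statement's English description precedes it below -/
import Mathlib

section
/- Every weighted game v on n voters admits an integer representation that is both type-revealing and dummy-revealing: there exist positive integer q and nonnegative integers w_1,…,w_n such that (q; w_1,…,w_n) is a representation of v, w_i = w_j whenever voters i and j are equivalent (i ≃ j), and w_i = 0 for every dummy voter i. -/
open Finset

/-- A (monotonic) simple game on `n` voters. -/
def IsSimpleGame {n : ℕ} (v : Finset (Fin n) → Bool) : Prop :=
  v ∅ = false ∧ v Finset.univ = true ∧
    ∀ S T : Finset (Fin n), S ⊆ T → v S = true → v T = true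

/-- `(q; w)` is a representation of the game `v`. -/
def IsRepresentation {n : ℕ} (v : Finset (Fin n) → Bool) (q : ℝ) (w : Fin n → ℝ) : Prop :=
  (∀ i, 0 ≤ w i) ∧ 0 < q ∧ ∀ S : Finset (Fin n), (q ≤ ∑ i ∈ S, w i ↔ v S = true)

/-- `v` is a weighted game. -/
def IsWeighted {n : ℕ} (v : Finset (Fin n) → Bool) : Prop :=
  ∃ (q : ℝ) (w : Fin n → ℝ), IsRepresentation v q w


/-- Voter `i` is a dummy of `v`. -/
def IsDummy {n : ℕ} (v : Finset (Fin n) → Bool) (i : Fin n) : Prop :=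
  ∀ S : Finset (Fin n), i ∉ S → v (insert i S) = v S


/-- Voters `i` and `j` are equivalent (`i ≃ j`). -/
def VotersEquiv {n : ℕ} (v : Finset (Fin n) → Bool) (i j : Fin n) : Prop :=
  ∀ S : Finset (Fin n), i ∉ S → j ∉ S → v (insert i S) = v (insert j S)


/-!
Start from a real representation `(q; w)`. Setting the weights of the dummies to `0` keeps it a
representation, since deleting dummies from a coalition does not change its value. Summing
`w ∘ σ` over the automorphism group `G` of the game gives a representation `(|G| q; w')` whose
weights are constant on the orbits of `G`; the transposition of two equivalent voters lies in `G`,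
and `G` maps dummies to dummies, so `w'` is type- and dummy-revealing. Finally, if `ε > 0` is the
least gap `q - w'(S)` over losing coalitions `S`, scale by `M` with `M ε > n` and round up: this
keeps equal weights equal and zero weights zero, and raises the weight of a coalition by less
than `n`, so losing coalitions stay losing.
-/

namespace Finset

variable {α : Type*} [DecidableEq α] {S : Finset α} {i j : α}

lemma map_swap_eq_self (h : i ∈ S ↔ j ∈ S) : S.map (Equiv.swap i j).toEmbedding = S := by
  ext x
  rw [mem_map_equiv, Equiv.symm_swap, Equiv.swap_apply_def]
  split_ifs <;> simp_all

lemma map_swap_eq_insert_erase (hi : i ∈ S) (hj : j ∉ S) :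
    S.map (Equiv.swap i j).toEmbedding = insert j (S.erase i) := by
  ext x
  rw [mem_map_equiv, Equiv.symm_swap, Equiv.swap_apply_def]
  split_ifs <;> aesop

end Finset

lemma exists_pos_le_sub_of_lt {β : Type*} [Finite β] (f : β → ℝ) (q : ℝ) :
    ∃ ε > 0, ∀ b, f b < q → f b ≤ q - ε := by
  cases isEmpty_or_nonempty β
  · exact ⟨1, one_pos, fun b => isEmptyElim b⟩
  let gap b := if f b < q then q - f b else 1
  have hgap : ∀ b, 0 < gap b := fun b => by unfold gap; split_ifs <;> linarith
  obtain ⟨b₀, hb₀⟩ := Finite.exists_min gap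
  refine ⟨gap b₀, hgap b₀, fun b hb => ?_⟩
  have := hb₀ b
  simp only [gap, if_pos hb] at this
  linarith

lemma exists_natCeil_scaling_le_sum_iff {α : Type*} [Fintype α] (w : α → ℝ) (hw : ∀ i, 0 ≤ w i)
    (q : ℝ) :
    ∃ M > 0, ∀ S : Finset α, (⌈M * q⌉₊ ≤ ∑ i ∈ S, ⌈M * w i⌉₊ ↔ q ≤ ∑ i ∈ S, w i) := by
  obtain ⟨ε, hε, hgap⟩ := exists_pos_le_sub_of_lt (fun S : Finset α => ∑ i ∈ S, w i) q
  set M := (Fintype.card α + 1) / ε with hM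
  have hMε : M * ε = Fintype.card α + 1 := by rw [hM]; field_simp
  refine ⟨M, by positivity, fun S => ?_⟩
  rw [Nat.ceil_le, Nat.cast_sum]
  constructor
  · intro hle
    by_contra! hlt
    have hround : ∑ i ∈ S, (⌈M * w i⌉₊ : ℝ) < M * q :=
      calc ∑ i ∈ S, (⌈M * w i⌉₊ : ℝ) ≤ ∑ i ∈ S, (M * w i + 1) :=
            sum_le_sum fun i _ => (Nat.ceil_lt_add_one (by positivity [hw i])).le
        _ = M * ∑ i ∈ S, w i + #S := by rw [sum_add_distrib, mul_sum]; simp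
        _ ≤ M * (q - ε) + Fintype.card α := by
            gcongr
            · exact hgap S hlt
            · exact_mod_cast card_le_univ S
        _ < M * q := by linarith
    linarith
  · intro hle
    calc M * q ≤ M * ∑ i ∈ S, w i := by gcongr
      _ = ∑ i ∈ S, M * w i := mul_sum _ _ _
      _ ≤ ∑ i ∈ S, (⌈M * w i⌉₊ : ℝ) := sum_le_sum fun i _ => Nat.le_ceil _

section Game

variable {n : ℕ} {v : Finset (Fin n) → Bool}

lemma IsDummy.apply_erase {i : Fin n} (h : IsDummy v i) (S : Finset (Fin n)) :
    v (S.erase i) = v S := by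
  by_cases hi : i ∈ S
  · rw [← h _ (notMem_erase i S), insert_erase hi]
  · rw [erase_eq_of_notMem hi]

lemma apply_sdiff_of_forall_isDummy {T : Finset (Fin n)} (hT : ∀ i ∈ T, IsDummy v i)
    (S : Finset (Fin n)) : v (S \ T) = v S := by
  induction T using Finset.induction_on with
  | empty => simp
  | insert a T _ ih =>
    rw [sdiff_insert, (hT a (mem_insert_self a T)).apply_erase,
      ih fun i hi => hT i (mem_insert_of_mem hi)]

lemma IsRepresentation.indicator_nonDummies {q : ℝ} {w : Fin n → ℝ}
    (h : IsRepresentation v q w) : IsRepresentation v q ({i | ¬IsDummy v i}.indicator w) := by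
  classical
  refine ⟨Set.indicator_nonneg fun i _ => h.1 i, h.2.1, fun S => ?_⟩
  have hS : v (S.filter fun i => ¬IsDummy v i) = v S := by
    rw [filter_not]
    exact apply_sdiff_of_forall_isDummy (fun i hi => (mem_filter.1 hi).2) S
  rw [sum_indicator_eq_sum_filter, ← hS]
  exact h.2.2 _

variable (v) in
def gameAutomorphisms : Subgroup (Equiv.Perm (Fin n)) where
  carrier := {σ | ∀ S, v (S.map σ.toEmbedding) = v S}
  one_mem' S := by rw [Equiv.Perm.one_def, Equiv.refl_toEmbedding, map_refl]
  mul_mem' {σ τ} hσ hτ S := by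
    rw [← hτ S, ← hσ (S.map τ.toEmbedding), map_map]
    rfl
  inv_mem' {σ} hσ S := by
    rw [← hσ, map_map]
    simp

lemma mem_gameAutomorphisms {σ : Equiv.Perm (Fin n)} :
    σ ∈ gameAutomorphisms v ↔ ∀ S, v (S.map σ.toEmbedding) = v S := Iff.rfl

lemma VotersEquiv.symm {i j : Fin n} (h : VotersEquiv v i j) : VotersEquiv v j i :=
  fun S hj hi => (h S hi hj).symm

lemma VotersEquiv.apply_map_swap_of_mem_of_notMem {i j : Fin n} (h : VotersEquiv v i j)
    {S : Finset (Fin n)} (hi : i ∈ S) (hj : j ∉ S) :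
    v (S.map (Equiv.swap i j).toEmbedding) = v S := by
  rw [map_swap_eq_insert_erase hi hj,
    ← h _ (notMem_erase i S) fun hj' => hj (mem_of_mem_erase hj'), insert_erase hi]

lemma VotersEquiv.swap_mem_gameAutomorphisms {i j : Fin n} (h : VotersEquiv v i j) :
    Equiv.swap i j ∈ gameAutomorphisms v := by
  refine mem_gameAutomorphisms.2 fun S => ?_
  by_cases hi : i ∈ S <;> by_cases hj : j ∈ S
  · rw [map_swap_eq_self (iff_of_true hi hj)]
  · exact h.apply_map_swap_of_mem_of_notMem hi hj
  · rw [Equiv.swap_comm]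
    exact h.symm.apply_map_swap_of_mem_of_notMem hj hi
  · rw [map_swap_eq_self (iff_of_false hi hj)]

lemma IsDummy.apply_of_mem_gameAutomorphisms {i : Fin n} (hi : IsDummy v i)
    {σ : Equiv.Perm (Fin n)} (hσ : σ ∈ gameAutomorphisms v) : IsDummy v (σ i) := by
  intro S hS
  set T := S.map σ.symm.toEmbedding
  have hTS : T.map σ.toEmbedding = S := by simp [T, map_map]
  have hiT : i ∉ T := by simpa [T, mem_map_equiv] using hS
  calc v (insert (σ i) S) = v ((insert i T).map σ.toEmbedding) := by rw [map_insert, hTS]; rfl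
    _ = v (insert i T) := hσ _
    _ = v T := hi T hiT
    _ = v S := by rw [← hσ T, hTS]

noncomputable instance : Fintype (gameAutomorphisms v) := Fintype.ofFinite _

variable (v) in
noncomputable def symmetrize (w : Fin n → ℝ) (i : Fin n) : ℝ :=
  ∑ σ : gameAutomorphisms v, w ((σ : Equiv.Perm (Fin n)) i)

lemma sum_symmetrize (w : Fin n → ℝ) (S : Finset (Fin n)) :
    ∑ i ∈ S, symmetrize v w i =
      ∑ σ : gameAutomorphisms v, ∑ i ∈ S.map (σ : Equiv.Perm (Fin n)).toEmbedding, w i := by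
  unfold symmetrize
  rw [sum_comm]
  simp only [sum_map, Equiv.coe_toEmbedding]

lemma IsRepresentation.symmetrize {q : ℝ} {w : Fin n → ℝ} (h : IsRepresentation v q w) :
    IsRepresentation v (Nat.card (gameAutomorphisms v) * q) (symmetrize v w) := by
  obtain ⟨hw, hq, hrep⟩ := h
  refine ⟨fun i => sum_nonneg fun σ _ => hw _, mul_pos (Nat.cast_pos.2 Nat.card_pos) hq,
    fun S => ?_⟩
  have hrepσ (σ : gameAutomorphisms v) :
      q ≤ ∑ i ∈ S.map (σ : Equiv.Perm (Fin n)).toEmbedding, w i ↔ v S = true := by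
    rw [hrep, σ.2 S]
  rw [sum_symmetrize, Nat.card_eq_fintype_card, ← nsmul_eq_mul, ← card_univ, ← sum_const]
  cases hS : v S
  · simp only [Bool.false_eq_true, iff_false, not_le]
    refine sum_lt_sum_of_nonempty ⟨1, mem_univ 1⟩ fun σ _ => ?_
    simpa [hS] using (hrepσ σ).not
  · simp only [iff_true]
    exact sum_le_sum fun σ _ => (hrepσ σ).2 hS

lemma symmetrize_apply_of_mem_gameAutomorphisms (w : Fin n → ℝ) {τ : Equiv.Perm (Fin n)}
    (hτ : τ ∈ gameAutomorphisms v) (i : Fin n) : symmetrize v w (τ i) = symmetrize v w i :=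
  Fintype.sum_equiv (Equiv.mulRight ⟨τ, hτ⟩) _ _ fun _ => rfl

lemma symmetrize_eq_zero_of_isDummy {w : Fin n → ℝ} (hw : ∀ j, IsDummy v j → w j = 0)
    {i : Fin n} (hi : IsDummy v i) : symmetrize v w i = 0 :=
  sum_eq_zero fun σ _ => hw _ (hi.apply_of_mem_gameAutomorphisms σ.2)

end Game

theorem exists_type_and_dummy_revealing_integer_representation_general {n : ℕ}
    (v : Finset (Fin n) → Bool) (hw : IsWeighted v) :
    ∃ (q : ℕ) (w : Fin n → ℕ), 0 < q ∧
      (∀ S : Finset (Fin n), (q ≤ ∑ i ∈ S, w i ↔ v S = true)) ∧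
      (∀ i j : Fin n, VotersEquiv v i j → w i = w j) ∧
      (∀ i : Fin n, IsDummy v i → w i = 0) := by
  obtain ⟨q₀, w₀, hrep₀⟩ := hw
  set w := symmetrize v ({i | ¬IsDummy v i}.indicator w₀)
  set q := Nat.card (gameAutomorphisms v) * q₀
  have hrep : IsRepresentation v q w := hrep₀.indicator_nonDummies.symmetrize
  obtain ⟨M, hM, hround⟩ := exists_natCeil_scaling_le_sum_iff w hrep.1 q
  refine ⟨⌈M * q⌉₊, fun i => ⌈M * w i⌉₊, Nat.ceil_pos.2 (mul_pos hM hrep.2.1),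
    fun S => (hround S).trans (hrep.2.2 S), fun i j hij => ?_, fun i hi => ?_⟩
  · have hwij : w (Equiv.swap i j i) = w i :=
      symmetrize_apply_of_mem_gameAutomorphisms _ hij.swap_mem_gameAutomorphisms i
    rw [Equiv.swap_apply_left] at hwij
    simp only [hwij]
  · have hdummy (j : Fin n) (hj : IsDummy v j) : {i | ¬IsDummy v i}.indicator w₀ j = 0 :=
      Set.indicator_of_notMem (not_not_intro hj) w₀
    simp [w, symmetrize_eq_zero_of_isDummy hdummy hi]

/-- Every weighted game admits an integer representation that is type-revealing
and dummy-revealing. -/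
theorem exists_type_and_dummy_revealing_integer_representation {n : ℕ}
    (v : Finset (Fin n) → Bool) (hs : IsSimpleGame v) (hw : IsWeighted v) :
    ∃ (q : ℕ) (w : Fin n → ℕ), 0 < q ∧
      (∀ S : Finset (Fin n), (q ≤ ∑ i ∈ S, w i ↔ v S = true)) ∧
      (∀ i j : Fin n, VotersEquiv v i j → w i = w j) ∧
      (∀ i : Fin n, IsDummy v i → w i = 0) :=
  exists_type_and_dummy_revealing_integer_representation_general v hw
end

section
/- For each weighted game v on n voters there exist positive real numbers q̃, w̃_1,…,w̃_{n−1} and a real number α > 0 such that for all δ_0, δ_1,…,δ_{n−1} ∈ [−α, α], the vector (q̃+δ_0; w̃_1+δ_1,…,w̃_{n−1}+δ_{n−1}, 1 − Σ_{i=1}^{n−1}(w̃_i+δ_i)) is a normalized representation of v, i.e., all n weights are nonnegative and sum to 1, the quota lies in (0,1], and the vector is a representation of v. -/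
/-!
Adding a small `ε > 0` to every weight of a representation keeps every winning coalition (which is
nonempty) at least `ε` above the quota and, once `ε` is small against the gap between the quota and
the heaviest losing coalition, every losing coalition at least `ε` below it. After normalizing the
weights to sum to one, this margin absorbs every perturbation of the quota and of the weights whose
total size is smaller than it.
-/

open Finset

section Margin

variable {ι : Type*}

def HasMargin (v : Finset ι → Bool) (q : ℝ) (w : ι → ℝ) (γ : ℝ) : Prop :=
  ∀ S, (v S = true → q + γ ≤ ∑ i ∈ S, w i) ∧ (v S = false → ∑ i ∈ S, w i ≤ q - γ)

def IsNormalizedRepresentation [Fintype ι] (v : Finset ι → Bool) (q : ℝ) (w : ι → ℝ) : Prop :=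
  (∀ i, 0 ≤ w i) ∧ ∑ i, w i = 1 ∧ 0 < q ∧ q ≤ 1 ∧ ∀ S, (q ≤ ∑ i ∈ S, w i ↔ v S = true)

theorem HasMargin.div {v : Finset ι → Bool} {q γ T : ℝ} {w : ι → ℝ} (h : HasMargin v q w γ)
    (hT : 0 < T) : HasMargin v (q / T) (fun i => w i / T) (γ / T) := by
  intro S
  rw [← sum_div, ← add_div, ← sub_div]
  exact ⟨fun hS => div_le_div_of_nonneg_right ((h S).1 hS) hT.le,
    fun hS => div_le_div_of_nonneg_right ((h S).2 hS) hT.le⟩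

variable [Fintype ι]

theorem HasMargin.le_sum_iff {v : Finset ι → Bool} {q q' γ : ℝ} {w w' : ι → ℝ}
    (h : HasMargin v q w γ) (hclose : |q' - q| + ∑ i, |w' i - w i| < γ) (S : Finset ι) :
    q' ≤ ∑ i ∈ S, w' i ↔ v S = true := by
  have hS : |∑ i ∈ S, w' i - ∑ i ∈ S, w i| ≤ ∑ i, |w' i - w i| := by
    rw [← sum_sub_distrib]
    exact (abs_sum_le_sum_abs _ _).trans
      (sum_le_sum_of_subset_of_nonneg (subset_univ S) fun _ _ _ => abs_nonneg _)
  obtain ⟨hS₁, hS₂⟩ := abs_le.mp hS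
  have hq₁ := neg_abs_le (q' - q)
  have hq₂ := le_abs_self (q' - q)
  cases hv : v S
  · have := (h S).2 hv
    simp only [Bool.false_eq_true, iff_false, not_le]
    linarith
  · have := (h S).1 hv
    simp only [iff_true]
    linarith

theorem HasMargin.isNormalizedRepresentation {v : Finset ι → Bool} (hempty : v ∅ = false)
    (huniv : v univ = true) {q q' γ : ℝ} {w w' : ι → ℝ} (h : HasMargin v q w γ)
    (hwγ : ∀ i, γ ≤ w i) (hsum : ∑ i, w' i = 1) (hclose : |q' - q| + ∑ i, |w' i - w i| < γ) :
    IsNormalizedRepresentation v q' w' := by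
  have hiff := h.le_sum_iff hclose
  refine ⟨fun i => ?_, hsum, ?_, ?_, hiff⟩
  · have hi : |w' i - w i| ≤ ∑ j, |w' j - w j| :=
      single_le_sum (fun j _ => abs_nonneg (w' j - w j)) (mem_univ i)
    linarith [neg_abs_le (w' i - w i), abs_nonneg (q' - q), hwγ i]
  · simpa [hempty] using hiff ∅
  · simpa [hsum] using (hiff univ).mpr huniv

end Margin

section Representation

variable {n : ℕ} {v : Finset (Fin n) → Bool} {q : ℝ} {w : Fin n → ℝ}

theorem IsRepresentation.apply_empty (h : IsRepresentation v q w) : v ∅ = false :=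
  Bool.eq_false_iff.mpr fun he => ((h.2.2 ∅).mpr he).not_gt (by simpa using h.2.1)

theorem IsRepresentation.exists_gap (h : IsRepresentation v q w) :
    ∃ η > 0, ∀ S, v S = false → ∑ i ∈ S, w i ≤ q - η := by
  obtain ⟨S₀, hS₀, hmax⟩ := exists_max_image (univ.filter fun S => v S = false)
    (fun S => ∑ i ∈ S, w i) ⟨∅, by simp [h.apply_empty]⟩
  have hlt : ∑ i ∈ S₀, w i < q := by
    by_contra! hle
    simp [(h.2.2 S₀).mp hle] at hS₀
  exact ⟨q - ∑ i ∈ S₀, w i, by linarith, fun S hS => by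
    linarith [hmax S (by simp [hS])]⟩

theorem IsRepresentation.exists_hasMargin (h : IsRepresentation v q w) :
    ∃ (w' : Fin n → ℝ) (γ : ℝ), 0 < γ ∧ (∀ i, γ ≤ w' i) ∧ HasMargin v q w' γ := by
  obtain ⟨η, hη, hgap⟩ := h.exists_gap
  -- A losing coalition has at most `n` members, so the shift raises it by at most `n γ = η - γ`.
  set γ := η / (n + 1) with hγ_def
  have hγ : 0 < γ := by positivity
  have hη_eq : η = (n + 1) * γ := by rw [hγ_def]; field_simp
  have hsum : ∀ S : Finset (Fin n), ∑ i ∈ S, (w i + γ) = ∑ i ∈ S, w i + #S * γ := by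
    intro S
    rw [sum_add_distrib, sum_const, nsmul_eq_mul]
  refine ⟨fun i => w i + γ, γ, hγ, fun i => le_add_of_nonneg_left (h.1 i), fun S => ⟨?_, ?_⟩⟩
  · intro hS
    have hne : S.Nonempty := nonempty_iff_ne_empty.mpr fun h₀ => by
      simp [h₀, h.apply_empty] at hS
    have hcard : (1 : ℝ) ≤ #S := by exact_mod_cast hne.card_pos
    rw [hsum]
    nlinarith [(h.2.2 S).mpr hS]
  · intro hS
    have hcard : (#S : ℝ) ≤ n := by exact_mod_cast (card_le_univ S).trans (Fintype.card_fin n).le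
    rw [hsum]
    nlinarith [hgap S hS]

theorem IsRepresentation.exists_normalized_hasMargin (h : IsRepresentation v q w)
    (huniv : v univ = true) :
    ∃ (q' : ℝ) (w' : Fin n → ℝ) (γ : ℝ),
      0 < γ ∧ (∀ i, γ ≤ w' i) ∧ ∑ i, w' i = 1 ∧ HasMargin v q' w' γ := by
  obtain ⟨w', γ, hγ, hwγ, hmargin⟩ := h.exists_hasMargin
  have hT : 0 < ∑ i, w' i := by linarith [(hmargin univ).1 huniv, h.2.1]
  refine ⟨q / ∑ i, w' i, fun i => w' i / ∑ i, w' i, γ / ∑ i, w' i, div_pos hγ hT,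
    fun i => div_le_div_of_nonneg_right (hwγ i) hT.le, ?_, hmargin.div hT⟩
  rw [← sum_div, div_self hT.ne']

end Representation

section Perturbation

variable {n : ℕ}

theorem sum_snoc_one_sub_sum (a : Fin n → ℝ) :
    ∑ j, (Fin.snoc a (1 - ∑ i, a i) : Fin (n + 1) → ℝ) j = 1 := by
  simp [Fin.sum_univ_castSucc]

theorem snoc_add_eq_add_snoc {w : Fin (n + 1) → ℝ} (hw : ∑ j, w j = 1) (δ : Fin n → ℝ) :
    (Fin.snoc (fun i => w i.castSucc + δ i) (1 - ∑ i, (w i.castSucc + δ i)) : Fin (n + 1) → ℝ)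
      = w + Fin.snoc δ (-∑ i, δ i) := by
  rw [Fin.sum_univ_castSucc] at hw
  ext j
  refine Fin.lastCases ?_ (fun i => ?_) j
  · simp only [Fin.snoc_last, Pi.add_apply, sum_add_distrib]
    linarith
  · simp

theorem sum_abs_snoc_neg_sum_le {α : ℝ} {δ : Fin n → ℝ} (hδ : ∀ i, |δ i| ≤ α) :
    ∑ j, |(Fin.snoc δ (-∑ i, δ i) : Fin (n + 1) → ℝ) j| ≤ 2 * n * α := by
  have hsum : ∑ i, |δ i| ≤ n * α := by
    simpa using sum_le_card_nsmul univ (fun i => |δ i|) α fun i _ => hδ i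
  simp only [Fin.sum_univ_castSucc, Fin.snoc_castSucc, Fin.snoc_last, abs_neg]
  linarith [abs_sum_le_sum_abs (fun i => δ i) univ]

end Perturbation

/-- Full dimensionality: every weighted game on `n+1` voters admits a normalized
representation that stays a normalized representation under all sufficiently
small perturbations of the quota and the first `n` weights (the last weight
being adjusted so that the weights sum to one). -/
theorem full_dimension {n : ℕ} (v : Finset (Fin (n+1)) → Bool)
    (hs : IsSimpleGame v) (hw : IsWeighted v) :
    ∃ (qt : ℝ) (wt : Fin n → ℝ) (α : ℝ), 0 < qt ∧ (∀ i, 0 < wt i) ∧ 0 < α ∧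
      ∀ (δ₀ : ℝ) (δ : Fin n → ℝ), δ₀ ∈ Set.Icc (-α) α →
        (∀ i, δ i ∈ Set.Icc (-α) α) →
        ∀ w : Fin (n+1) → ℝ,
          w = Fin.snoc (fun i => wt i + δ i) (1 - ∑ i, (wt i + δ i)) →
          ((∀ j, 0 ≤ w j) ∧ (∑ j, w j) = 1 ∧ 0 < qt + δ₀ ∧ qt + δ₀ ≤ 1 ∧
            ∀ S : Finset (Fin (n+1)), (qt + δ₀ ≤ ∑ j ∈ S, w j ↔ v S = true)) := by
  obtain ⟨q₀, w₀, hrep⟩ := hw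
  obtain ⟨q, w, γ, hγ, hwγ, hsum, hmargin⟩ := hrep.exists_normalized_hasMargin hs.2.1
  have hq : 0 < q := hγ.trans_le (by simpa using (hmargin ∅).2 hrep.apply_empty)
  set α := γ / (2 * n + 2) with hα_def
  have hα : 0 < α := by positivity
  have hαγ : (2 * n + 1) * α < γ := by rw [hα_def]; field_simp; linarith
  refine ⟨q, fun i => w i.castSucc, α, hq, fun i => hγ.trans_le (hwγ _), hα, ?_⟩
  rintro δ₀ δ hδ₀ hδ w' rfl
  have hsum' := sum_snoc_one_sub_sum fun i => w i.castSucc + δ i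
  rw [snoc_add_eq_add_snoc hsum] at hsum' ⊢
  have hd := sum_abs_snoc_neg_sum_le fun i => abs_le.mpr (hδ i)
  refine hmargin.isNormalizedRepresentation hrep.apply_empty hs.2.1 hwγ hsum' ?_
  simp only [Pi.add_apply, add_sub_cancel_left]
  linarith [abs_le.mpr hδ₀]
end

section
/- Let v be a weighted game on n voters with an integer representation (q; w_1,…,w_n) such that w_i ≥ 1 for all 1 ≤ i ≤ n. Then for all real numbers δ̃_0, δ̃_1,…,δ̃_n ∈ [−1/(5n), 1/(5n)], the vector (q − 2/5 + δ̃_0; w_1+δ̃_1,…,w_n+δ̃_n) is a representation of v. -/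
open Finset

/-! Every coalition's perturbed weight is within `1/5` of its integer weight, and the perturbed
quota is within `1/5` of `q - 2/5`. So comparing them is comparing the integers `q` and `∑ w`
up to a slack in `[0, 4/5] ⊆ [0, 1)`, which cannot change the outcome of an integer comparison. -/

theorem Int.cast_le_cast_add_iff {R : Type*} [Ring R] [LinearOrder R] [IsOrderedRing R]
    [FloorRing R] {a b : ℤ} {t : R} (ht₀ : 0 ≤ t) (ht₁ : t < 1) :
    (a : R) ≤ b + t ↔ a ≤ b := by
  rw [← Int.le_floor, Int.floor_intCast_add, Int.floor_eq_zero_iff.mpr ⟨ht₀, ht₁⟩, add_zero]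

theorem Finset.abs_sum_le_of_abs_le_div_card {ι : Type*} [Fintype ι] {δ : ι → ℝ} {ε : ℝ}
    (hε : 0 ≤ ε) (hδ : ∀ i, |δ i| ≤ ε / Fintype.card ι) (S : Finset ι) :
    |∑ i ∈ S, δ i| ≤ ε := by
  calc |∑ i ∈ S, δ i| ≤ ∑ i ∈ S, |δ i| := abs_sum_le_sum_abs δ S
    _ ≤ S.card • (ε / Fintype.card ι) := sum_le_card_nsmul _ _ _ fun i _ => hδ i
    _ ≤ Fintype.card ι * (ε / Fintype.card ι) := by
      rw [nsmul_eq_mul]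
      gcongr
      exact_mod_cast card_le_univ S
    _ ≤ ε := by
      rcases (Fintype.card ι).eq_zero_or_pos with h | h
      · simp [h, hε]
      · rw [mul_div_cancel₀ _ (by positivity)]

theorem perturbed_integer_representation_general {n : ℕ} (v : Finset (Fin n) → Bool)
    (q : ℤ) (w : Fin n → ℤ) (hq : 0 < q)
    (hw1 : ∀ i, 1 ≤ w i)
    (hrep : ∀ S : Finset (Fin n), (q ≤ ∑ i ∈ S, w i ↔ v S = true))
    (δ₀ : ℝ) (δ : Fin n → ℝ)
    (hδ₀ : δ₀ ∈ Set.Icc (-(1 / (5 * (n : ℝ)))) (1 / (5 * (n : ℝ))))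
    (hδ : ∀ i, δ i ∈ Set.Icc (-(1 / (5 * (n : ℝ)))) (1 / (5 * (n : ℝ)))) :
    IsRepresentation v ((q : ℝ) - 2/5 + δ₀) (fun i => (w i : ℝ) + δ i) := by
  have hdiv : 1 / (5 * (n : ℝ)) = 1 / 5 / Fintype.card (Fin n) := by
    rw [Fintype.card_fin, div_div]
  have hδ' : ∀ i, |δ i| ≤ 1 / 5 / Fintype.card (Fin n) := fun i => hdiv ▸ abs_le.mpr (hδ i)
  have hδ₀' : |δ₀| ≤ 1 / 5 :=
    (abs_le.mpr (hdiv ▸ hδ₀)).trans (div_nat_le_self_of_nonnneg (by norm_num) _)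
  have hsum (S : Finset (Fin n)) : |∑ i ∈ S, δ i| ≤ 1 / 5 :=
    abs_sum_le_of_abs_le_div_card (by norm_num) hδ' S
  obtain ⟨hδ₀l, hδ₀u⟩ := abs_le.mp hδ₀'
  have hq1 : (1 : ℝ) ≤ q := by exact_mod_cast hq
  refine ⟨fun i => ?_, by linarith, fun S => ?_⟩
  · have hw : (1 : ℝ) ≤ w i := by exact_mod_cast hw1 i
    have hδi := abs_le.mp (by simpa using hsum {i})
    linarith [hδi.1]
  · obtain ⟨hsl, hsu⟩ := abs_le.mp (hsum S)
    have hslack := Int.cast_le_cast_add_iff (R := ℝ) (a := q) (b := ∑ i ∈ S, w i)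
      (t := ∑ i ∈ S, δ i - δ₀ + 2 / 5) (by linarith) (by linarith)
    rw [← hrep S, ← hslack, sum_add_distrib, Int.cast_sum]
    constructor <;> intro h <;> linarith

/-- Perturbing an integer representation with all weights at least one by at most
$1/(5n)$ in each coordinate, and replacing the quota $q$ by $q - 2/5$ perturbed
by at most $1/(5n)$, still yields a representation of the game. -/
theorem perturbed_integer_representation {n : ℕ} (v : Finset (Fin n) → Bool)
    (hs : IsSimpleGame v) (q : ℤ) (w : Fin n → ℤ) (hq : 0 < q)
    (hw1 : ∀ i, 1 ≤ w i)
    (hrep : ∀ S : Finset (Fin n), (q ≤ ∑ i ∈ S, w i ↔ v S = true))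
    (δ₀ : ℝ) (δ : Fin n → ℝ)
    (hδ₀ : δ₀ ∈ Set.Icc (-(1 / (5 * (n : ℝ)))) (1 / (5 * (n : ℝ))))
    (hδ : ∀ i, δ i ∈ Set.Icc (-(1 / (5 * (n : ℝ)))) (1 / (5 * (n : ℝ)))) :
    IsRepresentation v ((q : ℝ) - 2/5 + δ₀) (fun i => (w i : ℝ) + δ i) :=
  perturbed_integer_representation_general v q w hq hw1 hrep δ₀ δ hδ₀ hδ
end

section
/- Let v be a weighted game on n voters and v^d its dual game. A weight vector (w_1,…,w_n) with w_i ≥ 0 and Σ_{i=1}^n w_i = 1 is feasible for v if and only if it is feasible for v^d; that is, the weight polytopes of v and v^d coincide. -/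
open Finset

/-! A normalized weight vector `w` turns the condition `q ≤ w(S)` for `v` into the condition
`1 - q < w(S)` for the dual game. A strict threshold is as good as a non-strict one: since
there are finitely many coalitions, the least weight of a winning coalition is a quota. -/

section

variable {n : ℕ}

def dualGame (v : Finset (Fin n) → Bool) : Finset (Fin n) → Bool := fun S => !v Sᶜ

@[simp]
lemma dualGame_dualGame (v : Finset (Fin n) → Bool) : dualGame (dualGame v) = v := by
  funext S
  simp [dualGame]

lemma exists_isRepresentation_of_lt_iff {u : Finset (Fin n) → Bool} {w : Fin n → ℝ} {c : ℝ} (hnn : ∀ i, 0 ≤ w i)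
    (hc : 0 ≤ c) (hu : ∀ S, u S = true ↔ c < ∑ i ∈ S, w i) (huniv : u univ = true) :
    ∃ q, IsRepresentation u q w := by
  set winning := univ.filter fun S => u S = true
  have hne : winning.Nonempty := ⟨univ, by simpa [winning] using huniv⟩
  obtain ⟨S₀, hS₀, hq⟩ := exists_mem_eq_inf' hne fun S => ∑ i ∈ S, w i
  have hcq : c < winning.inf' hne fun S => ∑ i ∈ S, w i := by
    rw [hq, ← hu]
    simpa [winning] using hS₀
  refine ⟨_, hnn, hc.trans_lt hcq, fun S => ⟨fun hle => (hu S).2 (hcq.trans_le hle), fun hS => ?_⟩⟩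
  exact inf'_le _ (by simpa [winning] using hS)

namespace IsRepresentation

lemma dualGame_iff {v : Finset (Fin n) → Bool} {q : ℝ} {w : Fin n → ℝ}
    (h : IsRepresentation v q w) (hsum : ∑ i, w i = 1) (S : Finset (Fin n)) :
    dualGame v S = true ↔ 1 - q < ∑ i ∈ S, w i := by
  have hcompl : ∑ i ∈ Sᶜ, w i = 1 - ∑ i ∈ S, w i := by
    rw [← hsum, ← sum_compl_add_sum S w]
    ring
  rw [dualGame, Bool.not_eq_true', ← Bool.not_eq_true, ← h.2.2, hcompl, not_le]
  constructor <;> intro <;> linarith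

lemma exists_dualGame {v : Finset (Fin n) → Bool} {q : ℝ} {w : Fin n → ℝ}
    (h : IsRepresentation v q w) (hsum : ∑ i, w i = 1) (huniv : v univ = true) :
    ∃ q', IsRepresentation (dualGame v) q' w := by
  have hq : q ≤ 1 := hsum ▸ (h.2.2 univ).2 huniv
  refine exists_isRepresentation_of_lt_iff h.1 (by linarith) (h.dualGame_iff hsum) ?_
  rw [h.dualGame_iff hsum, hsum]
  linarith [h.2.1]

end IsRepresentation

end

theorem feasible_iff_feasible_dual_general {n : ℕ} (v : Finset (Fin n) → Bool)
    (hs : IsSimpleGame v)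
    (w : Fin n → ℝ) (hsum : (∑ i, w i) = 1) :
    (∃ q : ℝ, IsRepresentation v q w) ↔
      (∃ q : ℝ, IsRepresentation (fun S : Finset (Fin n) => !v Sᶜ) q w) := by
  constructor
  · rintro ⟨q, hq⟩
    exact hq.exists_dualGame hsum hs.2.1
  · rintro ⟨q, hq⟩
    have huniv : dualGame v univ = true := by simp [dualGame, hs.1]
    simpa using IsRepresentation.exists_dualGame (v := dualGame v) hq hsum huniv

/-- A normalized weight vector is feasible for a weighted game iff it is feasible
for its dual game: the weight polytopes of a game and its dual coincide. -/
theorem feasible_iff_feasible_dual {n : ℕ} (v : Finset (Fin n) → Bool)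
    (hs : IsSimpleGame v) (hw : IsWeighted v)
    (w : Fin n → ℝ) (hnn : ∀ i, 0 ≤ w i) (hsum : (∑ i, w i) = 1) :
    (∃ q : ℝ, IsRepresentation v q w) ↔
      (∃ q : ℝ, IsRepresentation (fun S : Finset (Fin n) => !v Sᶜ) q w) :=
  feasible_iff_feasible_dual_general v hs w hsum
end

section
/- Let v be the weighted game on 3 voters with representation (3; 2,1,1), and consider its representation polytope projected to the coordinates (q, w_1, w_2) by setting w_3 = 1 − w_1 − w_2: the region R = {(q,w_1,w_2) ∈ ℝ³ : w_1 ≥ 0, w_2 ≥ 0, w_1 + w_2 ≤ 1, w_1 + w_2 ≥ q, w_1 ≤ q, 1 − w_1 ≤ q, 1 − w_2 ≥ q}. Then the Lebesgue volume of R equals 1/72, ∫_R w_1 d(q,w_1,w_2) = 7/864, and ∫_R w_2 d(q,w_1,w_2) = 5/1728; consequently the average representation weight vector of v equals (7/12, 5/24, 5/24). -/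
/-!
Slicing by `q`, the region is the set of `(q, w₁, w₂)` with `q ∈ [1/2, 1]`,
`w₁ ∈ [max (1 - q) (2q - 1), q]` and `w₂ ∈ [q - w₁, 1 - q]`. By Fubini every integral of a
polynomial over it is an iterated integral of polynomials, split at `q = 2/3`, where the lower
bound of `w₁` switches branches. The region is the tetrahedron with vertices `(1/2, 1/2, 0)`,
`(1/2, 1/2, 1/2)`, `(1, 1, 0)`, `(2/3, 1/3, 1/3)`, and the average weights are the coordinates of
its centroid.
-/

open MeasureTheory

/-- The projected representation polytope of the game $[3;2,1,1]$ in the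
coordinates $(q, w_1, w_2)$. -/
def representationRegion : Set (ℝ × ℝ × ℝ) :=
  {p | 0 ≤ p.2.1 ∧ 0 ≤ p.2.2 ∧ p.2.1 + p.2.2 ≤ 1 ∧ p.1 ≤ p.2.1 + p.2.2 ∧
       p.2.1 ≤ p.1 ∧ 1 - p.2.1 ≤ p.1 ∧ p.1 ≤ 1 - p.2.2}

open Set

def depProd {α β : Type*} (I : Set α) (S : α → Set β) : Set (α × β) :=
  {p | p.1 ∈ I ∧ p.2 ∈ S p.1}

section DepProd

variable {α β E : Type*} [MeasurableSpace α] [MeasurableSpace β] [NormedAddCommGroup E]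
  [NormedSpace ℝ E] {μ : Measure α} {ν : Measure β} {I : Set α} {S : α → Set β}
  {f : α × β → E}

theorem integral_indicator_depProd (hs : MeasurableSet (depProd I S)) (x : α) :
    ∫ y, (depProd I S).indicator f (x, y) ∂ν =
      I.indicator (fun x ↦ ∫ y in S x, f (x, y) ∂ν) x := by
  by_cases hx : x ∈ I
  · have hfiber : Prod.mk x ⁻¹' depProd I S = S x := by ext y; simp [depProd, hx]
    rw [indicator_of_mem hx, ← hfiber, ← integral_indicator (measurable_prodMk_left hs)]
    rfl
  · have hzero : ∀ y, (depProd I S).indicator f (x, y) = 0 :=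
      fun y ↦ indicator_of_notMem (fun h ↦ hx h.1) _
    simp [hzero, hx]

variable [SFinite ν]

theorem integrableOn_setIntegral_depProd (hI : MeasurableSet I)
    (hs : MeasurableSet (depProd I S)) (hf : IntegrableOn f (depProd I S) (μ.prod ν)) :
    IntegrableOn (fun x ↦ ∫ y in S x, f (x, y) ∂ν) I μ := by
  have := ((integrable_indicator_iff hs).2 hf).integral_prod_left
  simp_rw [integral_indicator_depProd hs] at this
  exact (integrable_indicator_iff hI).1 this

variable [SFinite μ]

theorem setIntegral_depProd (hI : MeasurableSet I) (hs : MeasurableSet (depProd I S))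
    (hf : IntegrableOn f (depProd I S) (μ.prod ν)) :
    ∫ p in depProd I S, f p ∂μ.prod ν = ∫ x in I, ∫ y in S x, f (x, y) ∂ν ∂μ := by
  rw [← integral_indicator hs, integral_prod _ ((integrable_indicator_iff hs).2 hf),
    ← integral_indicator hI]
  simp_rw [integral_indicator_depProd hs]

end DepProd

theorem integral_Icc_eq_intervalIntegral {E : Type*} [NormedAddCommGroup E] [NormedSpace ℝ E]
    {μ : Measure ℝ} [NullSingletonClass μ] {f : ℝ → E} {a b : ℝ} (hab : a ≤ b) :
    ∫ x in Icc a b, f x ∂μ = ∫ x in a..b, f x ∂μ := by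
  rw [integral_Icc_eq_integral_Ioc, intervalIntegral.integral_of_le hab]

theorem integral_eq_cubic {f : ℝ → ℝ} {c₀ c₁ c₂ c₃ : ℝ}
    (hf : ∀ x, f x = c₀ + c₁ * x + c₂ * x ^ 2 + c₃ * x ^ 3) (a b : ℝ) :
    ∫ x in a..b, f x =
      c₀ * (b - a) + c₁ * (b ^ 2 - a ^ 2) / 2 + c₂ * (b ^ 3 - a ^ 3) / 3 +
        c₃ * (b ^ 4 - a ^ 4) / 4 := by
  have hint : ∀ g : ℝ → ℝ, Continuous g → IntervalIntegrable g volume a b :=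
    fun g hg ↦ hg.intervalIntegrable a b
  simp_rw [hf]
  rw [intervalIntegral.integral_add (hint _ (by fun_prop)) (hint _ (by fun_prop)),
    intervalIntegral.integral_add (hint _ (by fun_prop)) (hint _ (by fun_prop)),
    intervalIntegral.integral_add (hint _ (by fun_prop)) (hint _ (by fun_prop)),
    intervalIntegral.integral_const, intervalIntegral.integral_const_mul,
    intervalIntegral.integral_const_mul, intervalIntegral.integral_const_mul, integral_id,
    integral_pow, integral_pow, smul_eq_mul]
  ring

def representationSlice (q : ℝ) : Set (ℝ × ℝ) :=
  depProd (Icc (max (1 - q) (2 * q - 1)) q) fun w₁ ↦ Icc (q - w₁) (1 - q)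

theorem representationRegion_eq_depProd :
    representationRegion = depProd (Icc (1 / 2) 1) representationSlice := by
  ext ⟨q, w₁, w₂⟩
  simp only [representationRegion, depProd, representationSlice, mem_ofPred_eq, mem_Icc,
    max_le_iff]
  constructor
  · rintro ⟨-, -, -, h₁, h₂, h₃, h₄⟩
    refine ⟨⟨?_, ?_⟩, ⟨⟨?_, ?_⟩, ?_⟩, ?_, ?_⟩ <;> linarith
  · rintro ⟨-, ⟨⟨h₁, h₂⟩, h₃⟩, h₄, h₅⟩
    refine ⟨?_, ?_, ?_, ?_, ?_, ?_, ?_⟩ <;> linarith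

theorem measurableSet_representationRegion : MeasurableSet representationRegion := by
  simp only [representationRegion, ofPred_and]
  refine .inter ?_ (.inter ?_ (.inter ?_ (.inter ?_ (.inter ?_ (.inter ?_ ?_))))) <;>
    exact measurableSet_le (by fun_prop) (by fun_prop)

theorem measurableSet_representationSlice (q : ℝ) : MeasurableSet (representationSlice q) := by
  simp only [representationSlice, depProd, mem_Icc, ofPred_and]
  refine .inter (.inter ?_ ?_) (.inter ?_ ?_) <;>
    exact measurableSet_le (by fun_prop) (by fun_prop)

theorem representationRegion_subset_Icc : representationRegion ⊆ Icc 0 1 := by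
  rintro ⟨q, w₁, w₂⟩ ⟨h₁, h₂, h₃, h₄, h₅, h₆, h₇⟩
  simp only [mem_Icc, Prod.le_def, Prod.fst_zero, Prod.snd_zero, Prod.fst_one, Prod.snd_one]
  refine ⟨⟨?_, ?_, ?_⟩, ?_, ?_, ?_⟩ <;> linarith

theorem representationSlice_subset_Icc (q : ℝ) :
    representationSlice q ⊆ Icc (1 - q, 0) (q, 1 - q) := by
  rintro ⟨w₁, w₂⟩ ⟨⟨h₁, h₂⟩, h₃, h₄⟩
  simp only [mem_Icc, Prod.mk_le_mk]
  exact ⟨⟨le_of_max_le_left h₁, by linarith⟩, h₂, h₄⟩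

theorem integrableOn_representationRegion {f : ℝ × ℝ × ℝ → ℝ} (hf : Continuous f) :
    IntegrableOn f representationRegion :=
  hf.integrableOn_Icc.mono_set representationRegion_subset_Icc

theorem setIntegral_representationSlice {g : ℝ × ℝ → ℝ} (hg : Continuous g) {q : ℝ}
    (hq : q ∈ Icc (1 / 2) 1) :
    ∫ w in representationSlice q, g w =
      ∫ w₁ in max (1 - q) (2 * q - 1)..q, ∫ w₂ in (q - w₁)..(1 - q), g (w₁, w₂) := by
  have hm : max (1 - q) (2 * q - 1) ≤ q := max_le (by linarith [hq.1]) (by linarith [hq.2])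
  have hg_int : IntegrableOn g (representationSlice q) (volume.prod volume) := by
    rw [← Measure.volume_eq_prod]
    exact hg.integrableOn_Icc.mono_set (representationSlice_subset_Icc q)
  rw [Measure.volume_eq_prod, representationSlice,
    setIntegral_depProd measurableSet_Icc (measurableSet_representationSlice q) hg_int,
    integral_Icc_eq_intervalIntegral hm]
  refine intervalIntegral.integral_congr fun w₁ hw₁ ↦ ?_
  rw [uIcc_of_le hm] at hw₁
  exact integral_Icc_eq_intervalIntegral (by linarith [le_max_right (1 - q) (2 * q - 1), hw₁.1])

theorem setIntegral_representationRegion {f : ℝ × ℝ × ℝ → ℝ} (hf : Continuous f) :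
    ∫ p in representationRegion, f p =
      (∫ q in (1 / 2 : ℝ)..(2 / 3), ∫ w₁ in (1 - q)..q, ∫ w₂ in (q - w₁)..(1 - q),
        f (q, w₁, w₂)) +
      ∫ q in (2 / 3 : ℝ)..1, ∫ w₁ in (2 * q - 1)..q, ∫ w₂ in (q - w₁)..(1 - q),
        f (q, w₁, w₂) := by
  have hmeas := representationRegion_eq_depProd ▸ measurableSet_representationRegion
  have hf_int :
      IntegrableOn f (depProd (Icc (1 / 2) 1) representationSlice) (volume.prod volume) := by
    rw [← representationRegion_eq_depProd, ← Measure.volume_eq_prod]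
    exact integrableOn_representationRegion hf
  have hF_int : ∀ a b : ℝ, 1 / 2 ≤ a → a ≤ b → b ≤ 1 →
      IntervalIntegrable (fun q ↦ ∫ w in representationSlice q, f (q, w)) volume a b :=
    fun a b ha hab hb ↦ (intervalIntegrable_iff_integrableOn_Icc_of_le hab).2
      ((integrableOn_setIntegral_depProd measurableSet_Icc hmeas hf_int).mono_set
        (Icc_subset_Icc ha hb))
  rw [representationRegion_eq_depProd, Measure.volume_eq_prod,
    setIntegral_depProd measurableSet_Icc hmeas hf_int,
    integral_Icc_eq_intervalIntegral (by norm_num),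
    ← intervalIntegral.integral_add_adjacent_intervals (b := 2 / 3)
      (hF_int _ _ le_rfl (by norm_num) (by norm_num))
      (hF_int _ _ (by norm_num) (by norm_num) le_rfl)]
  congr 1 <;> refine intervalIntegral.integral_congr fun q hq ↦ ?_ <;>
    rw [uIcc_of_le (by norm_num)] at hq <;> obtain ⟨hq₁, hq₂⟩ := hq
  · rw [setIntegral_representationSlice (by fun_prop) ⟨hq₁, by linarith⟩,
      max_eq_left (by linarith)]
  · rw [setIntegral_representationSlice (by fun_prop) ⟨by linarith, hq₂⟩,
      max_eq_right (by linarith)]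

theorem setIntegral_one_representationRegion :
    ∫ _ in representationRegion, (1 : ℝ) = 1 / 72 := by
  have hmid : ∀ q m : ℝ, ∫ w₁ in m..q, ∫ _ in (q - w₁)..(1 - q), (1 : ℝ) =
      (1 - 2 * q) * (q - m) + (q ^ 2 - m ^ 2) / 2 := fun q m ↦ by
    simp only [integral_one]
    rw [integral_eq_cubic (c₀ := 1 - 2 * q) (c₁ := 1) (c₂ := 0) (c₃ := 0) fun _ ↦ by ring]
    ring
  rw [setIntegral_representationRegion continuous_const]
  simp only [hmid]
  rw [integral_eq_cubic (c₀ := -3 / 2) (c₁ := 5) (c₂ := -4) (c₃ := 0) fun _ ↦ by ring,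
    integral_eq_cubic (c₀ := 1 / 2) (c₁ := -1) (c₂ := 1 / 2) (c₃ := 0) fun _ ↦ by ring]
  norm_num

theorem setIntegral_weight₁_representationRegion :
    ∫ p in representationRegion, p.2.1 = 7 / 864 := by
  have hmid : ∀ q m : ℝ, ∫ w₁ in m..q, ∫ _ in (q - w₁)..(1 - q), w₁ =
      (1 - 2 * q) * (q ^ 2 - m ^ 2) / 2 + (q ^ 3 - m ^ 3) / 3 := fun q m ↦ by
    simp only [intervalIntegral.integral_const, smul_eq_mul]
    rw [integral_eq_cubic (c₀ := 0) (c₁ := 1 - 2 * q) (c₂ := 1) (c₃ := 0) fun _ ↦ by ring]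
    ring
  rw [setIntegral_representationRegion (by fun_prop)]
  simp only [hmid]
  rw [integral_eq_cubic (c₀ := -5 / 6) (c₁ := 3) (c₂ := -3) (c₃ := 2 / 3) fun _ ↦ by ring,
    integral_eq_cubic (c₀ := -1 / 6) (c₁ := 1) (c₂ := -3 / 2) (c₃ := 2 / 3) fun _ ↦ by ring]
  norm_num

theorem setIntegral_weight₂_representationRegion :
    ∫ p in representationRegion, p.2.2 = 5 / 1728 := by
  have hmid : ∀ q m : ℝ, ∫ w₁ in m..q, ∫ w₂ in (q - w₁)..(1 - q), w₂ =
      ((1 - q) ^ 2 - q ^ 2) / 2 * (q - m) + q * (q ^ 2 - m ^ 2) / 2 - (q ^ 3 - m ^ 3) / 6 :=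
    fun q m ↦ by
    simp only [integral_id]
    rw [integral_eq_cubic (c₀ := ((1 - q) ^ 2 - q ^ 2) / 2) (c₁ := q) (c₂ := -1 / 2) (c₃ := 0)
      fun _ ↦ by ring]
    ring
  rw [setIntegral_representationRegion (by fun_prop)]
  simp only [hmid]
  rw [integral_eq_cubic (c₀ := -1 / 3) (c₁ := 1) (c₂ := -1 / 2) (c₃ := -1 / 3) fun _ ↦ by ring,
    integral_eq_cubic (c₀ := 1 / 3) (c₁ := -1) (c₂ := 1) (c₃ := -1 / 3) fun _ ↦ by ring]
  norm_num

theorem volume_representationRegion :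
    volume representationRegion = ENNReal.ofReal (1 / 72) := by
  have h := setIntegral_one_representationRegion
  rw [setIntegral_const, smul_eq_mul, mul_one, measureReal_def] at h
  rw [← h, ENNReal.ofReal_toReal]
  exact ne_top_of_le_ne_top isCompact_Icc.measure_lt_top.ne
    (measure_mono representationRegion_subset_Icc)

/-- For the game $[3;2,1,1]$, the projected representation polytope has volume
$1/72$, $\int w_1 = 7/864$ and $\int w_2 = 5/1728$, so the average representation
weight vector is $(7/12, 5/24, 5/24)$. -/
theorem average_representation_game_3_211 :
    volume representationRegion = ENNReal.ofReal (1 / 72) ∧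
    (∫ p in representationRegion, p.2.1) = 7 / 864 ∧
    (∫ p in representationRegion, p.2.2) = 5 / 1728 ∧
    (∫ p in representationRegion, p.2.1) / (volume representationRegion).toReal
      = 7 / 12 ∧
    (∫ p in representationRegion, p.2.2) / (volume representationRegion).toReal
      = 5 / 24 ∧
    (∫ p in representationRegion, (1 - p.2.1 - p.2.2)) /
        (volume representationRegion).toReal = 5 / 24 := by
  have hw₃ : ∫ p in representationRegion, (1 - p.2.1 - p.2.2) = 5 / 1728 := by
    rw [integral_sub (integrableOn_representationRegion (by fun_prop))
        (integrableOn_representationRegion (by fun_prop)),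
      integral_sub (integrableOn_representationRegion continuous_const)
        (integrableOn_representationRegion (by fun_prop)),
      setIntegral_one_representationRegion, setIntegral_weight₁_representationRegion,
      setIntegral_weight₂_representationRegion]
    norm_num
  refine ⟨volume_representationRegion, setIntegral_weight₁_representationRegion,
    setIntegral_weight₂_representationRegion, ?_, ?_, ?_⟩ <;>
  norm_num [volume_representationRegion, setIntegral_weight₁_representationRegion,
    setIntegral_weight₂_representationRegion, hw₃]
end
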